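/- Let ξ : [0,1] → ℝ^d solve the primal geodesic equation ξ̈(t) = 2α ξ̇(t) (d/dt) φ(ξ(t)) where φ is smooth. Then ξ(t) = (1 - h(t)) ξ(0) + h(t) ξ(1) where h(t) = (∫₀ᵗ e^{2αφ(ξ(s))} ds) / (∫₀¹ e^{2αφ(ξ(s))} ds); in particular the trace of ξ is the straight line segment from ξ(0) to ξ(1). -/

import Mathlib

open Set MeasureTheory intervalIntegral in
/-- a solution of the primal geodesic equation
`ξ̈(t) = 2α ξ̇(t) (d/dt)φ(ξ(t))` is the straight line segment from `ξ(0)` to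
`ξ(1)` reparameterized by
`h(t) = (∫₀ᵗ e^{2αφ(ξ(s))} ds)/(∫₀¹ e^{2αφ(ξ(s))} ds)`. -/
theorem stmt19 {d : ℕ} (α : ℝ) (hα : 0 < α)
    (φ : EuclideanSpace ℝ (Fin d) → ℝ) (hφ : ContDiff ℝ (⊤ : ℕ∞) φ)
    (ξ ξ' : ℝ → EuclideanSpace ℝ (Fin d)) (φd : ℝ → ℝ)
    (hvel : ∀ t ∈ Set.Icc (0:ℝ) 1, HasDerivAt ξ (ξ' t) t)
    (hφd : ∀ t ∈ Set.Icc (0:ℝ) 1, HasDerivAt (fun s => φ (ξ s)) (φd t) t)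
    (hacc : ∀ t ∈ Set.Icc (0:ℝ) 1,
      HasDerivAt ξ' ((2 * α * φd t) • ξ' t) t) :
    ∀ t ∈ Set.Icc (0:ℝ) 1,
      ξ t =
        (1 - (∫ s in (0:ℝ)..t, Real.exp (2 * α * φ (ξ s))) /
              (∫ s in (0:ℝ)..(1:ℝ), Real.exp (2 * α * φ (ξ s)))) • ξ 0 +
        ((∫ s in (0:ℝ)..t, Real.exp (2 * α * φ (ξ s))) /
              (∫ s in (0:ℝ)..(1:ℝ), Real.exp (2 * α * φ (ξ s)))) • ξ 1 := by
  set E : ℝ → ℝ := fun s => Real.exp (2 * α * φ (ξ s)) with hE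
  have hEct : ∀ t ∈ Set.Icc (0:ℝ) 1, ContinuousAt E t := by
    intro t ht
    exact Real.continuous_exp.continuousAt.comp
      (continuousAt_const.mul (hφd t ht).continuousAt)
  have hEcont : ContinuousOn E (Set.Icc 0 1) :=
    fun t ht => (hEct t ht).continuousWithinAt
  have hEpos : ∀ s, 0 < E s := fun s => Real.exp_pos _
  have hEint : ∀ t ∈ Set.Icc (0:ℝ) 1, IntervalIntegrable E volume 0 t := by
    intro t ht
    apply ContinuousOn.intervalIntegrable
    apply hEcont.mono
    rw [Set.uIcc_of_le ht.1]
    exact Set.Icc_subset_Icc le_rfl ht.2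
  -- the "conserved" quantity  c t • ξ' t  with  c t = exp(-(2αφ(ξ t)))
  set c : ℝ → ℝ := fun s => Real.exp (-(2 * α * φ (ξ s))) with hc
  have hgd : ∀ t ∈ Set.Icc (0:ℝ) 1, HasDerivAt (fun s => c s • ξ' s) 0 t := by
    intro t ht
    have h1 : HasDerivAt c (c t * -(2 * α * φd t)) t :=
      (((hφd t ht).const_mul (2*α)).neg).exp
    have h2 := h1.smul (hacc t ht)
    have h3 : c t • ((2 * α * φd t) • ξ' t) + (c t * -(2 * α * φd t)) • ξ' t
        = (0 : EuclideanSpace ℝ (Fin d)) := by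
      rw [smul_smul, ← add_smul]
      have : c t * (2 * α * φd t) + c t * -(2 * α * φd t) = 0 := by ring
      rw [this, zero_smul]
    rw [← h3]
    exact h2
  have hgconst : ∀ t ∈ Set.Icc (0:ℝ) 1, c t • ξ' t = c 0 • ξ' 0 :=
    constant_of_has_deriv_right_zero
      (fun s hs => ((hgd s hs).continuousAt).continuousWithinAt)
      (fun s hs => (hgd s (Set.Ico_subset_Icc_self hs)).hasDerivWithinAt)
  set v : EuclideanSpace ℝ (Fin d) := c 0 • ξ' 0 with hv
  have hxi' : ∀ t ∈ Set.Icc (0:ℝ) 1, ξ' t = E t • v := by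
    intro t ht
    rw [← hgconst t ht, smul_smul]
    have h1 : E t * c t = 1 := by
      rw [hE, hc]
      rw [← Real.exp_add]
      norm_num
    rw [h1, one_smul]
  -- FTC: ξ t = ξ 0 + (∫₀ᵗ E) • v on [0,1]
  have hFeq : ∀ t ∈ Set.Icc (0:ℝ) 1,
      ξ t = ξ 0 + (∫ s in (0:ℝ)..t, E s) • v := by
    have hIder : ∀ y ∈ Set.Ico (0:ℝ) 1,
        HasDerivWithinAt (fun u => ∫ s in (0:ℝ)..u, E s) (E y) (Set.Ici y) y := by
      intro y hy
      have hy' : y ∈ Set.Icc (0:ℝ) 1 := Set.Ico_subset_Icc_self hy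
      refine intervalIntegral.integral_hasDerivWithinAt_right (t := Set.Ioi y)
        (hEint y hy') ?_ (hEct y hy').continuousWithinAt
      exact ⟨Set.Icc y 1, Icc_mem_nhdsGT_of_mem ⟨le_rfl, hy.2⟩,
        (hEcont.mono (Set.Icc_subset_Icc hy.1 le_rfl)).aestronglyMeasurable
          measurableSet_Icc⟩
    have hIcont : ContinuousOn (fun u => ∫ s in (0:ℝ)..u, E s) (Set.Icc 0 1) := by
      have := intervalIntegral.continuousOn_primitive_interval
        (a := (0:ℝ)) (b := (1:ℝ)) (f := E) (μ := volume) ?_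
      · rwa [Set.uIcc_of_le zero_le_one] at this
      · rw [Set.uIcc_of_le zero_le_one]
        exact hEcont.integrableOn_Icc
    refine eq_of_has_deriv_right_eq (f' := fun y => E y • v)
      (fun y hy => ?_) (fun y hy => ?_)
      (fun s hs => ((hvel s hs).continuousAt).continuousWithinAt)
      ((continuousOn_const.add (hIcont.smul continuousOn_const)))
      (by simp)
    · have := (hvel y (Set.Ico_subset_Icc_self hy)).hasDerivWithinAt (s := Set.Ici y)
      rwa [hxi' y (Set.Ico_subset_Icc_self hy)] at this
    · exact ((hIder y hy).smul_const v).const_add (ξ 0)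
  have hI1pos : 0 < ∫ s in (0:ℝ)..1, E s :=
    intervalIntegral.intervalIntegral_pos_of_pos_on
      (hEint 1 (by norm_num)) (fun s _ => hEpos s) one_pos
  intro t ht
  rw [hFeq t ht]
  have h1 := hFeq 1 (by norm_num)
  have hv' : v = (∫ s in (0:ℝ)..1, E s)⁻¹ • (ξ 1 - ξ 0) := by
    rw [h1, add_sub_cancel_left, smul_smul, inv_mul_cancel₀ hI1pos.ne', one_smul]
  rw [hv']
  set I1 := ∫ s in (0:ℝ)..1, E s
  set It := ∫ s in (0:ℝ)..t, E s
  rw [div_eq_mul_inv]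
  module
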